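/- arXiv:1601.07768 — 6 statements merged into one kernel-verified Lean document; each statement's English description precedes it below -/
import Mathlib

section
/- Let M ≥ 1, let P_1, …, P_M ≥ 0 with Σ_{m=1}^{M} P_m > 0, let Q_M := 1 − Σ_{m=1}^{M} P_m ∈ [0, 1), and let R > 0. Suppose λ : (0, ∞) → ℝ is such that for each θ > 0, λ(θ) ∈ (0, 1) and λ(θ)^M = Σ_{m=1}^{M} P_m e^{−θR} λ(θ)^{M−m} + Q_M. Then lim_{θ → 0⁺} ( −ln(λ(θ)) / θ ) = R (1 − Q_M) / ( Σ_{m=1}^{M} m P_m + M Q_M ). -/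
open Filter Topology Finset

/-!
With `S(x) = ∑ P_m x^{M-m}` the characteristic equation reads `λ^M - Q = e^{-θR} S(λ)`, i.e.
`θR = g(λ)` for `g(x) = log S(x) - log (x^M - Q)`, so `-ln λ / θ = R · (-ln λ) / g(λ)`.
Since `x^{M-1} ≤ S(x) + Q` on `[0, 1]`, the root satisfies `e^{-θR} ≤ λ(θ) < 1`, hence `λ → 1`,
and the quotient tends to the ratio of derivatives at `1`: `-1 / g'(1)`, where
`g'(1) = -(∑ m P_m + M Q) / (1 - Q)`.
-/

theorem HasDerivAt.tendsto_div_nhdsNE {𝕜 : Type*} [NontriviallyNormedField 𝕜] {f g : 𝕜 → 𝕜}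
    {f' g' a : 𝕜} (hf : HasDerivAt f f' a) (hg : HasDerivAt g g' a) (hfa : f a = 0)
    (hga : g a = 0) (hg' : g' ≠ 0) :
    Tendsto (fun x => f x / g x) (𝓝[≠] a) (𝓝 (f' / g')) := by
  refine (hf.tendsto_slope.div hg.tendsto_slope hg').congr' ?_
  filter_upwards [self_mem_nhdsWithin] with x hx
  rw [Pi.div_apply, slope_def_field, slope_def_field, hfa, hga, sub_zero, sub_zero,
    div_div_div_cancel_right₀ (sub_ne_zero.2 hx)]

theorem tendsto_nhdsNE_one_of_exp_le {R : ℝ} {lam : ℝ → ℝ}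
    (h : ∀ θ > 0, Real.exp (-(θ * R)) ≤ lam θ ∧ lam θ < 1) :
    Tendsto lam (𝓝[>] 0) (𝓝[≠] 1) := by
  have hexp : Tendsto (fun θ => Real.exp (-(θ * R))) (𝓝[>] 0) (𝓝 1) := by
    have hcont : Continuous fun θ => Real.exp (-(θ * R)) := by fun_prop
    simpa using (hcont.tendsto 0).mono_left nhdsWithin_le_nhds
  refine tendsto_nhdsWithin_iff.2 ⟨tendsto_of_tendsto_of_tendsto_of_le_of_le' hexp
    tendsto_const_nhds ?_ ?_, ?_⟩ <;> filter_upwards [self_mem_nhdsWithin] with θ hθ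
  · exact (h θ hθ).1
  · exact (h θ hθ).2.le
  · exact (h θ hθ).2.ne

def harqSum (M : ℕ) (P : ℕ → ℝ) (x : ℝ) : ℝ := ∑ m ∈ Icc 1 M, P m * x ^ (M - m)

noncomputable def harqLogRatio (M : ℕ) (P : ℕ → ℝ) (Q x : ℝ) : ℝ :=
  Real.log (harqSum M P x) - Real.log (x ^ M - Q)

section

variable {M : ℕ} {P : ℕ → ℝ} {Q : ℝ}

theorem harqSum_one : harqSum M P 1 = ∑ m ∈ Icc 1 M, P m := by simp [harqSum]

theorem hasDerivAt_harqSum (x : ℝ) :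
    HasDerivAt (harqSum M P) (∑ m ∈ Icc 1 M, P m * ((M - m : ℕ) * x ^ (M - m - 1))) x :=
  HasDerivAt.fun_sum fun m _ => (hasDerivAt_pow (M - m) x).const_mul (P m)

theorem sum_mul_pow_pred_le_harqSum (hP : ∀ m ∈ Icc 1 M, 0 ≤ P m) {x : ℝ} (hx0 : 0 ≤ x)
    (hx1 : x ≤ 1) : (∑ m ∈ Icc 1 M, P m) * x ^ (M - 1) ≤ harqSum M P x := by
  rw [sum_mul]
  refine sum_le_sum fun m hm => mul_le_mul_of_nonneg_left ?_ (hP m hm)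
  exact pow_le_pow_of_le_one hx0 hx1 (Nat.sub_le_sub_left (mem_Icc.1 hm).1 M)

theorem harqSum_pos (hP : ∀ m ∈ Icc 1 M, 0 ≤ P m) (hPpos : 0 < ∑ m ∈ Icc 1 M, P m) {x : ℝ}
    (hx0 : 0 < x) (hx1 : x ≤ 1) : 0 < harqSum M P x :=
  (mul_pos hPpos (pow_pos hx0 _)).trans_le (sum_mul_pow_pred_le_harqSum hP hx0.le hx1)

theorem le_of_pow_eq_mul_harqSum_add (hM : 1 ≤ M) (hP : ∀ m ∈ Icc 1 M, 0 ≤ P m)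
    (hPQ : ∑ m ∈ Icc 1 M, P m + Q = 1) (hQ : 0 ≤ Q) {E x : ℝ} (hE0 : 0 ≤ E) (hE1 : E ≤ 1)
    (hx0 : 0 < x) (hx1 : x ≤ 1) (hx : x ^ M = E * harqSum M P x + Q) : E ≤ x := by
  have hpow : x ^ (M - 1) ≤ harqSum M P x + Q := by
    have hS := sum_mul_pow_pred_le_harqSum hP hx0.le hx1
    have hQx : Q * x ^ (M - 1) ≤ Q := mul_le_of_le_one_right hQ (pow_le_one₀ hx0.le hx1)
    calc x ^ (M - 1) = (∑ m ∈ Icc 1 M, P m + Q) * x ^ (M - 1) := by rw [hPQ, one_mul]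
      _ ≤ harqSum M P x + Q := by linarith [add_mul (∑ m ∈ Icc 1 M, P m) Q (x ^ (M - 1))]
  refine le_of_mul_le_mul_right ?_ (pow_pos hx0 (M - 1))
  calc E * x ^ (M - 1) ≤ E * (harqSum M P x + Q) := mul_le_mul_of_nonneg_left hpow hE0
    _ ≤ E * harqSum M P x + Q := by nlinarith
    _ = x * x ^ (M - 1) := by rw [← hx, ← pow_succ', Nat.sub_add_cancel hM]

theorem harqLogRatio_eq {x t : ℝ} (hS : 0 < harqSum M P x)
    (hx : x ^ M = Real.exp (-t) * harqSum M P x + Q) : harqLogRatio M P Q x = t := by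
  rw [harqLogRatio, show x ^ M - Q = Real.exp (-t) * harqSum M P x by linarith,
    Real.log_mul (Real.exp_ne_zero _) hS.ne', Real.log_exp]
  ring

theorem harqLogRatio_one (hPQ : ∑ m ∈ Icc 1 M, P m + Q = 1) : harqLogRatio M P Q 1 = 0 := by
  rw [harqLogRatio, harqSum_one, one_pow, ← hPQ, add_sub_cancel_right, sub_self]

theorem hasDerivAt_harqLogRatio_one (hPQ : ∑ m ∈ Icc 1 M, P m + Q = 1) (hQ : Q ≠ 1) :
    HasDerivAt (harqLogRatio M P Q)
      (-((∑ m ∈ Icc 1 M, (m : ℝ) * P m) + M * Q) / (1 - Q)) 1 := by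
  have hS : harqSum M P 1 = 1 - Q := by rw [harqSum_one, ← hPQ]; ring
  have h1Q : 1 - Q ≠ 0 := sub_ne_zero.2 hQ.symm
  have hlog := ((hasDerivAt_harqSum 1).log (hS ▸ h1Q)).sub
    (((hasDerivAt_pow M (1 : ℝ)).sub_const Q).log (by rwa [one_pow]))
  simp only [one_pow, mul_one] at hlog
  have hderiv : ∑ m ∈ Icc 1 M, P m * (M - m : ℕ)
      = M * (1 - Q) - ∑ m ∈ Icc 1 M, (m : ℝ) * P m := by
    rw [← hPQ, add_sub_cancel_right, mul_sum, ← sum_sub_distrib]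
    refine sum_congr rfl fun m hm => ?_
    rw [Nat.cast_sub (mem_Icc.1 hm).2]
    ring
  refine hlog.congr_deriv ?_
  rw [hderiv, hS]
  field_simp
  ring

end

/-- Corollary 3: the effective capacity of truncated-HARQ
converges to the throughput as `θ → 0⁺`. If for each `θ > 0`, `λ(θ) ∈ (0,1)`
solves the characteristic equation
`λ^M = ∑_{m=1}^{M} P_m e^{-θR} λ^{M-m} + Q_M`, then
`-ln(λ(θ))/θ → R (1 - Q_M) / (∑_{m=1}^{M} m P_m + M Q_M)` as `θ → 0⁺`. -/
theorem effective_capacity_tendsto_throughput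
    (M : ℕ) (hM : 1 ≤ M)
    (P : ℕ → ℝ) (hP : ∀ m ∈ Finset.Icc 1 M, 0 ≤ P m)
    (hPpos : 0 < ∑ m ∈ Finset.Icc 1 M, P m)
    (Q : ℝ) (hQdef : Q = 1 - ∑ m ∈ Finset.Icc 1 M, P m) (hQ0 : 0 ≤ Q)
    (R : ℝ) (hR : 0 < R)
    (lam : ℝ → ℝ)
    (hlam : ∀ θ : ℝ, 0 < θ → 0 < lam θ ∧ lam θ < 1 ∧
      lam θ ^ M = (∑ m ∈ Finset.Icc 1 M,
        P m * Real.exp (-(θ * R)) * lam θ ^ (M - m)) + Q) :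
    Filter.Tendsto (fun θ : ℝ => -Real.log (lam θ) / θ)
      (nhdsWithin 0 (Set.Ioi 0))
      (nhds (R * (1 - Q) /
        ((∑ m ∈ Finset.Icc 1 M, (m : ℝ) * P m) + (M : ℝ) * Q))) := by
  have hPQ : ∑ m ∈ Icc 1 M, P m + Q = 1 := by rw [hQdef]; ring
  have hchar (θ : ℝ) (hθ : 0 < θ) :
      lam θ ^ M = Real.exp (-(θ * R)) * harqSum M P (lam θ) + Q := by
    rw [(hlam θ hθ).2.2, harqSum, mul_sum]
    exact congrArg (· + Q) (sum_congr rfl fun m _ => by ring)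
  have hlam_one : Tendsto lam (𝓝[>] 0) (𝓝[≠] 1) := by
    refine tendsto_nhdsNE_one_of_exp_le (R := R) fun θ hθ => ⟨?_, (hlam θ hθ).2.1⟩
    have hexp_le_one : Real.exp (-(θ * R)) ≤ 1 :=
      Real.exp_le_one_iff.2 (neg_nonpos.2 (mul_pos hθ hR).le)
    exact le_of_pow_eq_mul_harqSum_add hM hP hPQ hQ0 (Real.exp_pos _).le hexp_le_one
      (hlam θ hθ).1 (hlam θ hθ).2.1.le (hchar θ hθ)
  have hthroughput : 0 < (∑ m ∈ Icc 1 M, (m : ℝ) * P m) + M * Q := by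
    have hle : ∑ m ∈ Icc 1 M, P m ≤ ∑ m ∈ Icc 1 M, (m : ℝ) * P m :=
      sum_le_sum fun m hm => le_mul_of_one_le_left (hP m hm) (mod_cast (mem_Icc.1 hm).1)
    have hMQ : 0 ≤ (M : ℝ) * Q := by positivity
    linarith
  have hratio := (HasDerivAt.tendsto_div_nhdsNE (Real.hasDerivAt_log one_ne_zero).neg
    (hasDerivAt_harqLogRatio_one hPQ (by linarith)) (by simp) (harqLogRatio_one hPQ)
    (div_ne_zero (neg_ne_zero.2 hthroughput.ne') (by linarith))).comp hlam_one
  have hlimit : R * (-1⁻¹ / (-((∑ m ∈ Icc 1 M, (m : ℝ) * P m) + M * Q) / (1 - Q)))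
      = R * (1 - Q) / ((∑ m ∈ Icc 1 M, (m : ℝ) * P m) + M * Q) := by
    field_simp
  rw [← hlimit]
  refine (hratio.const_mul R).congr' ?_
  filter_upwards [self_mem_nhdsWithin] with θ (hθ : 0 < θ)
  obtain ⟨hlam0, hlam1, -⟩ := hlam θ hθ
  rw [Function.comp_apply, Pi.neg_apply,
    harqLogRatio_eq (harqSum_pos hP hPpos hlam0 hlam1.le) (hchar θ hθ)]
  field_simp
end

section
/- Let P_1, P_2 ≥ 0 with P_1 + P_2 ≤ 1, Q_2 := 1 − P_1 − P_2, and suppose P_2 + Q_2 > 0. Let θ, R > 0 and set a_1 := P_1 e^{−θR}, a_2 := P_2 e^{−θR} + Q_2. Then λ_+ := (a_1 + √(a_1² + 4 a_2))/2 satisfies λ_+² − a_1 λ_+ − a_2 = 0, λ_+ > 0, λ_+ is at least the absolute value of the other root of this quadratic, and the effective capacity satisfies −ln(λ_+)/θ = R − (1/θ) ln( ( P_1 + √( P_1² + 4 (P_2 e^{θR} + Q_2 e^{2θR}) ) ) / 2 ). -/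
/-!
Since `a₂ > 0` the discriminant exceeds `a₁²`, so `λ₊ > 0`, and `a₁ ≥ 0` makes `λ₊` dominate the
other root. With `e = e^{-θR}` one has `a₁ = e P₁` and `a₂ = e² (P₂ e^{θR} + Q₂ e^{2θR})`, and the
larger root of `λ² - bλ - c` is homogeneous under `(b, c) ↦ (t b, t² c)`, so
`λ₊ = e · (P₁ + √(P₁² + 4(P₂ e^{θR} + Q₂ e^{2θR})))/2`; taking logarithms gives the closed form.
-/

noncomputable def largerRoot (b c : ℝ) : ℝ := (b + √(b ^ 2 + 4 * c)) / 2

section LargerRoot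

variable {b c : ℝ}

theorem largerRoot_isRoot (h : 0 ≤ b ^ 2 + 4 * c) :
    largerRoot b c ^ 2 - b * largerRoot b c - c = 0 := by
  have hsq := Real.sq_sqrt h
  unfold largerRoot
  linear_combination hsq / 4

theorem largerRoot_pos (hc : 0 < c) : 0 < largerRoot b c := by
  have : -b < √(b ^ 2 + 4 * c) := Real.lt_sqrt_of_sq_lt (by linarith)
  unfold largerRoot
  linarith

theorem abs_smallerRoot_le_largerRoot (hb : 0 ≤ b) :
    |(b - √(b ^ 2 + 4 * c)) / 2| ≤ largerRoot b c := by
  have := abs_sub b √(b ^ 2 + 4 * c)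
  rw [abs_of_nonneg hb, abs_of_nonneg (Real.sqrt_nonneg _)] at this
  rw [abs_div, abs_two, largerRoot]
  linarith

theorem largerRoot_mul {t : ℝ} (ht : 0 ≤ t) :
    largerRoot (t * b) (t ^ 2 * c) = t * largerRoot b c := by
  rw [largerRoot, largerRoot, show (t * b) ^ 2 + 4 * (t ^ 2 * c) = t ^ 2 * (b ^ 2 + 4 * c) by ring,
    Real.sqrt_mul (sq_nonneg t), Real.sqrt_sq ht]
  ring

end LargerRoot

theorem truncated_HARQ_M2_effective_capacity_general
    (P1 P2 : ℝ) (hP1 : 0 ≤ P1) (hP2 : 0 ≤ P2) (hsum : P1 + P2 ≤ 1)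
    (Q2 : ℝ) (hQ2 : Q2 = 1 - P1 - P2) (hpos : 0 < P2 + Q2)
    (θ R : ℝ) (hθ : 0 < θ)
    (a1 a2 : ℝ)
    (ha1 : a1 = P1 * Real.exp (-(θ * R)))
    (ha2 : a2 = P2 * Real.exp (-(θ * R)) + Q2)
    (lamp : ℝ) (hlamp : lamp = (a1 + Real.sqrt (a1 ^ 2 + 4 * a2)) / 2) :
    lamp ^ 2 - a1 * lamp - a2 = 0 ∧
    0 < lamp ∧
    |(a1 - Real.sqrt (a1 ^ 2 + 4 * a2)) / 2| ≤ lamp ∧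
    -Real.log lamp / θ = R - (1 / θ) * Real.log
      ((P1 + Real.sqrt (P1 ^ 2 +
        4 * (P2 * Real.exp (θ * R) + Q2 * Real.exp (2 * θ * R)))) / 2) := by
  set e := Real.exp (-(θ * R)) with he
  have he_pos : 0 < e := Real.exp_pos _
  have ha2_pos : 0 < a2 := by
    rcases hP2.lt_or_eq with hP2 | rfl
    · nlinarith
    · linarith
  have hlamp_pos : 0 < lamp := hlamp ▸ largerRoot_pos ha2_pos
  have hlamp_scale : lamp = e * largerRoot P1
      (P2 * Real.exp (θ * R) + Q2 * Real.exp (2 * θ * R)) := by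
    have hexp_one : e ^ 2 * Real.exp (θ * R) = e := by
      rw [he, sq, ← Real.exp_add, ← Real.exp_add]; ring_nf
    have hexp_two : e ^ 2 * Real.exp (2 * θ * R) = 1 := by
      rw [he, sq, ← Real.exp_add, ← Real.exp_add, ← Real.exp_zero]; ring_nf
    have ha2_scale : a2 = e ^ 2 * (P2 * Real.exp (θ * R) + Q2 * Real.exp (2 * θ * R)) := by
      linear_combination ha2 - P2 * hexp_one - Q2 * hexp_two
    rw [hlamp, ← largerRoot_mul he_pos.le, ha2_scale, ha1, mul_comm P1, largerRoot]
  refine ⟨hlamp ▸ largerRoot_isRoot (by positivity), hlamp_pos,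
    hlamp ▸ abs_smallerRoot_le_largerRoot (ha1 ▸ by positivity), ?_⟩
  have hS_pos := pos_of_mul_pos_right (hlamp_scale ▸ hlamp_pos) he_pos.le
  rw [hlamp_scale, Real.log_mul he_pos.ne' hS_pos.ne', he, Real.log_exp, largerRoot]
  field_simp
  ring

/-- Corollary 5: closed-form effective capacity of
truncated-HARQ with `M = 2`. With `a₁ = P₁ e^{-θR}`,
`a₂ = P₂ e^{-θR} + Q₂`, the quantity `λ₊ = (a₁ + √(a₁² + 4a₂))/2` solves
`λ² - a₁λ - a₂ = 0`, is positive, dominates the other root in absolute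
value, and
`-ln(λ₊)/θ = R - (1/θ) ln((P₁ + √(P₁² + 4(P₂ e^{θR} + Q₂ e^{2θR})))/2)`. -/
theorem truncated_HARQ_M2_effective_capacity
    (P1 P2 : ℝ) (hP1 : 0 ≤ P1) (hP2 : 0 ≤ P2) (hsum : P1 + P2 ≤ 1)
    (Q2 : ℝ) (hQ2 : Q2 = 1 - P1 - P2) (hpos : 0 < P2 + Q2)
    (θ R : ℝ) (hθ : 0 < θ) (hR : 0 < R)
    (a1 a2 : ℝ)
    (ha1 : a1 = P1 * Real.exp (-(θ * R)))
    (ha2 : a2 = P2 * Real.exp (-(θ * R)) + Q2)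
    (lamp : ℝ) (hlamp : lamp = (a1 + Real.sqrt (a1 ^ 2 + 4 * a2)) / 2) :
    lamp ^ 2 - a1 * lamp - a2 = 0 ∧
    0 < lamp ∧
    |(a1 - Real.sqrt (a1 ^ 2 + 4 * a2)) / 2| ≤ lamp ∧
    -Real.log lamp / θ = R - (1 / θ) * Real.log
      ((P1 + Real.sqrt (P1 ^ 2 +
        4 * (P2 * Real.exp (θ * R) + Q2 * Real.exp (2 * θ * R)))) / 2) :=
  truncated_HARQ_M2_effective_capacity_general P1 P2 hP1 hP2 hsum Q2 hQ2 hpos θ R hθ a1 a2 ha1 ha2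
    lamp hlamp
end

section
/- Let M ≥ 1, let P_1, …, P_M ≥ 0 with Σ_{m=1}^{M} P_m > 0, let Q_M := 1 − Σ_{m=1}^{M} P_m ∈ [0, 1), let R > 0, and let ψ > 0 satisfy Q_M e^{ψM} < 1. Define C := R ψ / ( ln( Σ_{m=1}^{M} P_m e^{ψ m} ) − ln( 1 − Q_M e^{ψ M} ) ) and θ := ψ / C. Then C > 0, and λ := e^{−ψ} satisfies the truncated-HARQ characteristic equation λ^M = Σ_{m=1}^{M} P_m e^{−θR} λ^{M−m} + Q_M; equivalently, e^{θR} = ( Σ_{m=1}^{M} P_m e^{ψ m} ) / ( 1 − Q_M e^{ψ M} ). -/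
/-!
Write `S = ∑ P_m e^{ψm}` and `D = 1 - Q e^{ψM}`. Since `∑ P_m = 1 - Q`, `Q ≥ 0` and every
`e^{ψm} > 1`, we get `0 < D ≤ 1 - Q < S`, so the logarithmic denominator of `C` is positive and
`θR = ln S - ln D`, i.e. `e^{θR} = S / D`. With `λ = e^{-ψ}` the powers `λ^{M-m} = e^{ψm} λ^M`
turn the right-hand side of the characteristic equation into `e^{-θR} S λ^M + Q = D λ^M + Q`,
which is `λ^M` because `Q e^{ψM} λ^M = Q`.
-/

open Finset Real

theorem Finset.sum_lt_sum_mul_of_one_lt {ι : Type*} {s : Finset ι} {w f : ι → ℝ}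
    (hw : ∀ i ∈ s, 0 ≤ w i) (hpos : 0 < ∑ i ∈ s, w i) (hf : ∀ i ∈ s, 1 < f i) :
    ∑ i ∈ s, w i < ∑ i ∈ s, w i * f i := by
  obtain ⟨j, hj, hwj⟩ : ∃ j ∈ s, (0 : ℝ) < w j :=
    exists_lt_of_sum_lt (by simpa using hpos)
  refine sum_lt_sum (fun i hi => ?_) ⟨j, hj, ?_⟩
  · exact le_mul_of_one_le_right (hw i hi) (hf i hi).le
  · exact lt_mul_of_one_lt_right hwj (hf j hj)

theorem one_sub_mul_exp_lt_sum_mul_exp {M : ℕ} {P : ℕ → ℝ}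
    (hP : ∀ m ∈ Icc 1 M, 0 ≤ P m) (hPpos : 0 < ∑ m ∈ Icc 1 M, P m)
    {Q : ℝ} (hQdef : Q = 1 - ∑ m ∈ Icc 1 M, P m) (hQ0 : 0 ≤ Q) {ψ : ℝ} (hψ : 0 < ψ) :
    1 - Q * exp (ψ * M) < ∑ m ∈ Icc 1 M, P m * exp (ψ * m) := by
  have hexp : ∀ m ∈ Icc 1 M, 1 < exp (ψ * m) := fun m hm =>
    one_lt_exp_iff.mpr (mul_pos hψ (Nat.cast_pos.mpr (mem_Icc.mp hm).1))
  have hQ : Q ≤ Q * exp (ψ * M) := le_mul_of_one_le_right hQ0 (one_le_exp (by positivity))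
  calc 1 - Q * exp (ψ * M) ≤ 1 - Q := by linarith
    _ = ∑ m ∈ Icc 1 M, P m := by rw [hQdef]; ring
    _ < _ := sum_lt_sum_mul_of_one_lt hP hPpos hexp

theorem exp_neg_pow_sub {ψ : ℝ} {m M : ℕ} (hmM : m ≤ M) :
    exp (-ψ) ^ (M - m) = exp (ψ * m) * exp (-ψ) ^ M := by
  rw [← exp_nat_mul, ← exp_nat_mul, ← exp_add, Nat.cast_sub hmM]
  ring_nf

theorem exp_neg_pow_eq_sum_add_of_exp_mul_eq (M : ℕ) (P : ℕ → ℝ) {Q ψ a : ℝ}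
    (h : exp a * (1 - Q * exp (ψ * M)) = ∑ m ∈ Icc 1 M, P m * exp (ψ * m)) :
    exp (-ψ) ^ M = (∑ m ∈ Icc 1 M, P m * exp (-a) * exp (-ψ) ^ (M - m)) + Q := by
  have hsum : ∑ m ∈ Icc 1 M, P m * exp (-a) * exp (-ψ) ^ (M - m)
      = exp (-a) * exp (-ψ) ^ M * ∑ m ∈ Icc 1 M, P m * exp (ψ * m) := by
    rw [mul_sum]
    refine sum_congr rfl fun m hm => ?_
    rw [exp_neg_pow_sub (mem_Icc.mp hm).2]
    ring
  have hM : exp (ψ * M) * exp (-ψ) ^ M = 1 := by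
    rw [← exp_nat_mul, ← exp_add]
    ring_nf
    exact exp_zero
  have ha : exp (-a) * exp a = 1 := by rw [← exp_add, neg_add_cancel, exp_zero]
  rw [hsum, ← h]
  linear_combination -(exp (-ψ) ^ M * (1 - Q * exp (ψ * M))) * ha + Q * hM

theorem effective_capacity_in_psi_truncated_HARQ_general
    (M : ℕ)
    (P : ℕ → ℝ) (hP : ∀ m ∈ Finset.Icc 1 M, 0 ≤ P m)
    (hPpos : 0 < ∑ m ∈ Finset.Icc 1 M, P m)
    (Q : ℝ) (hQdef : Q = 1 - ∑ m ∈ Finset.Icc 1 M, P m) (hQ0 : 0 ≤ Q)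
    (R : ℝ) (hR : 0 < R)
    (ψ : ℝ) (hψ : 0 < ψ) (hQψ : Q * Real.exp (ψ * M) < 1)
    (C : ℝ) (hC : C = R * ψ /
      (Real.log (∑ m ∈ Finset.Icc 1 M, P m * Real.exp (ψ * m))
        - Real.log (1 - Q * Real.exp (ψ * M))))
    (θ : ℝ) (hθ : θ = ψ / C) :
    0 < C ∧
    Real.exp (-ψ) ^ M = (∑ m ∈ Finset.Icc 1 M,
        P m * Real.exp (-(θ * R)) * Real.exp (-ψ) ^ (M - m)) + Q ∧
    Real.exp (θ * R) = (∑ m ∈ Finset.Icc 1 M, P m * Real.exp (ψ * m)) /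
      (1 - Q * Real.exp (ψ * M)) := by
  set S := ∑ m ∈ Icc 1 M, P m * exp (ψ * m)
  set D := 1 - Q * exp (ψ * M)
  have hD : 0 < D := sub_pos.mpr hQψ
  have hDS : D < S := one_sub_mul_exp_lt_sum_mul_exp hP hPpos hQdef hQ0 hψ
  have hS : 0 < S := hD.trans hDS
  have hlog : 0 < log S - log D := sub_pos.mpr (log_lt_log hD hDS)
  have hCpos : 0 < C := by rw [hC]; positivity
  have hθR : θ * R = log S - log D := by rw [hθ, hC]; field_simp
  have hexp : exp (θ * R) = S / D := by rw [hθR, exp_sub, exp_log hS, exp_log hD]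
  refine ⟨hCpos, exp_neg_pow_eq_sum_add_of_exp_mul_eq M P ?_, hexp⟩
  rw [hexp, div_mul_cancel₀ S hD.ne']

/-- Corollary 7: truncated-HARQ effective capacity expressed
in the QoS-parameter `ψ`. With
`C = Rψ / (ln(∑_{m=1}^{M} P_m e^{ψm}) - ln(1 - Q_M e^{ψM}))` and `θ = ψ/C`,
one has `C > 0`, `λ = e^{-ψ}` satisfies the truncated-HARQ characteristic
equation `λ^M = ∑_{m=1}^{M} P_m e^{-θR} λ^{M-m} + Q_M`, and equivalently
`e^{θR} = (∑_{m=1}^{M} P_m e^{ψm})/(1 - Q_M e^{ψM})`. -/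
theorem effective_capacity_in_psi_truncated_HARQ
    (M : ℕ) (hM : 1 ≤ M)
    (P : ℕ → ℝ) (hP : ∀ m ∈ Finset.Icc 1 M, 0 ≤ P m)
    (hPpos : 0 < ∑ m ∈ Finset.Icc 1 M, P m)
    (Q : ℝ) (hQdef : Q = 1 - ∑ m ∈ Finset.Icc 1 M, P m) (hQ0 : 0 ≤ Q)
    (R : ℝ) (hR : 0 < R)
    (ψ : ℝ) (hψ : 0 < ψ) (hQψ : Q * Real.exp (ψ * M) < 1)
    (C : ℝ) (hC : C = R * ψ /
      (Real.log (∑ m ∈ Finset.Icc 1 M, P m * Real.exp (ψ * m))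
        - Real.log (1 - Q * Real.exp (ψ * M))))
    (θ : ℝ) (hθ : θ = ψ / C) :
    0 < C ∧
    Real.exp (-ψ) ^ M = (∑ m ∈ Finset.Icc 1 M,
        P m * Real.exp (-(θ * R)) * Real.exp (-ψ) ^ (M - m)) + Q ∧
    Real.exp (θ * R) = (∑ m ∈ Finset.Icc 1 M, P m * Real.exp (ψ * m)) /
      (1 - Q * Real.exp (ψ * M)) :=
  effective_capacity_in_psi_truncated_HARQ_general M P hP hPpos Q hQdef hQ0 R hR ψ hψ hQψ C hC θ hθ
end

section
/- Let ψ > 0, Θ̃ > 0, and R > 0 be real. Define C := R / (1 + Θ̃ (e^{ψ} − 1)/ψ) and θ := ψ / C. Then 0 < C < R, θ > 0, θ R = ψ + Θ̃(e^{ψ} − 1), and λ := e^{−ψ} satisfies the persistent-RR Rayleigh characteristic relation e^{θR} = λ^{−1} e^{−Θ̃(1 − 1/λ)}. -/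
open Real

theorem exp_sub_one_div_pos {x : ℝ} (hx : x ≠ 0) : 0 < (exp x - 1) / x := by
  rcases hx.lt_or_gt with hneg | hpos
  · exact div_pos_of_neg_of_neg (by linarith [exp_lt_one_iff.mpr hneg]) hneg
  · exact div_pos (by linarith [one_lt_exp_iff.mpr hpos]) hpos

theorem div_div_mul_cancel_right {K : Type*} [Field K] (a b d : K) (hb : b ≠ 0) :
    a / (b / d) * b = a * d := by
  rw [div_div_eq_mul_div, div_mul_cancel₀ _ hb]

/-- The characteristic relation `e^{θR} = λ⁻¹ e^{-Θ(1 - 1/λ)}` at `λ = e^{-ψ}`, `θR = ψ + Θ(e^ψ - 1)`. -/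
theorem exp_add_mul_exp_sub_one_eq (ψ Θ : ℝ) :
    exp (ψ + Θ * (exp ψ - 1)) = (exp (-ψ))⁻¹ * exp (-Θ * (1 - (exp (-ψ))⁻¹)) := by
  rw [exp_neg, inv_inv, exp_add]
  congr 2
  ring

/-- Corollary 12: persistent-RR Rayleigh effective capacity
in the QoS-parameter `ψ`. With `C = R/(1 + Θ̃(e^ψ - 1)/ψ)` and `θ = ψ/C`,
one has `0 < C < R`, `θ > 0`, `θR = ψ + Θ̃(e^ψ - 1)`, and `λ = e^{-ψ}`
satisfies the characteristic relation `e^{θR} = λ^{-1} e^{-Θ̃(1 - 1/λ)}`. -/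
theorem RR_rayleigh_effective_capacity_psi
    (ψ Θ R : ℝ) (hψ : 0 < ψ) (hΘ : 0 < Θ) (hR : 0 < R)
    (C : ℝ) (hC : C = R / (1 + Θ * (Real.exp ψ - 1) / ψ))
    (θ : ℝ) (hθ : θ = ψ / C) :
    0 < C ∧ C < R ∧ 0 < θ ∧
    θ * R = ψ + Θ * (Real.exp ψ - 1) ∧
    Real.exp (θ * R) = (Real.exp (-ψ))⁻¹ *
      Real.exp (-Θ * (1 - (Real.exp (-ψ))⁻¹)) := by
  have hdenom : 1 < 1 + Θ * (exp ψ - 1) / ψ := by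
    have := mul_pos hΘ (exp_sub_one_div_pos hψ.ne')
    rw [mul_div_assoc]
    linarith
  have hCpos : 0 < C := hC ▸ div_pos hR (by linarith)
  have hθR : θ * R = ψ + Θ * (exp ψ - 1) := by
    rw [hθ, hC, div_div_mul_cancel_right _ _ _ hR.ne', mul_add, mul_one,
      mul_div_cancel₀ _ hψ.ne']
  exact ⟨hCpos, hC ▸ div_lt_self hR hdenom, hθ ▸ div_pos hψ hCpos, hθR,
    hθR ▸ exp_add_mul_exp_sub_one_eq ψ Θ⟩
end

section
/- Let 0 < Q_1 < 1, R > 0, and ψ > 0 with Q_1 e^{ψ} < 1. Define C := R / ( 1 + ψ^{−1} ln( (1 − Q_1) / (1 − Q_1 e^{ψ}) ) ) and θ := ψ / C. Then C > 0, θ > 0, and e^{−ψ} = Q_1 + (1 − Q_1) e^{−θR}; equivalently, C = −(1/θ) ln( Q_1 + (1 − Q_1) e^{−θR} ) and ψ = θ C. -/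
/-! The closed form comes from solving `e^{-ψ} = Q₁ + (1 - Q₁) e^{-x}` for `x = θR`:
`e^{-x} = (e^{-ψ} - Q₁)/(1 - Q₁)`, i.e. `x = ψ + ln((1 - Q₁)/(1 - Q₁ e^ψ))`. This `x` is positive
because `e^{-ψ} < 1`, and `C = R ψ / x`, `θ = x / R` then give all the claims. -/

open Real

/-- The value of `θR` at which the ARQ effective capacity has QoS-parameter `ψ`. -/
noncomputable def arqExponent (Q ψ : ℝ) : ℝ :=
  ψ + log ((1 - Q) / (1 - Q * exp ψ))

section

variable {Q ψ : ℝ}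

theorem exp_neg_arqExponent (hQ : Q < 1) (hQψ : Q * exp ψ < 1) :
    exp (-arqExponent Q ψ) = (exp (-ψ) - Q) / (1 - Q) := by
  have hQ' : 0 < 1 - Q := by linarith
  have hQψ' : 0 < 1 - Q * exp ψ := by linarith
  rw [arqExponent, neg_add, exp_add, exp_neg (log _), exp_log (by positivity), inv_div,
    exp_neg ψ]
  field_simp

theorem arqExponent_spec (hQ : Q < 1) (hQψ : Q * exp ψ < 1) :
    Q + (1 - Q) * exp (-arqExponent Q ψ) = exp (-ψ) := by
  rw [exp_neg_arqExponent hQ hQψ]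
  field_simp [(by linarith : (1 - Q) ≠ 0)]
  ring

theorem arqExponent_pos (hψ : 0 < ψ) (hQ : Q < 1) (hQψ : Q * exp ψ < 1) :
    0 < arqExponent Q ψ := by
  have h : exp (-ψ) < 1 := exp_lt_one_iff.mpr (by linarith)
  have h' : exp (-arqExponent Q ψ) < 1 := by
    rw [exp_neg_arqExponent hQ hQψ, div_lt_one (by linarith)]
    linarith
  exact neg_lt_zero.mp (exp_lt_one_iff.mp h')

end

theorem ARQ_effective_capacity_psi_general
    (Q1 R ψ : ℝ) (hQ1' : Q1 < 1) (hR : 0 < R) (hψ : 0 < ψ)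
    (hQψ : Q1 * Real.exp ψ < 1)
    (C : ℝ) (hC : C = R / (1 + ψ⁻¹ *
      Real.log ((1 - Q1) / (1 - Q1 * Real.exp ψ))))
    (θ : ℝ) (hθ : θ = ψ / C) :
    0 < C ∧ 0 < θ ∧
    Real.exp (-ψ) = Q1 + (1 - Q1) * Real.exp (-(θ * R)) ∧
    C = -(1 / θ) * Real.log (Q1 + (1 - Q1) * Real.exp (-(θ * R))) ∧
    ψ = θ * C := by
  have hx := arqExponent_pos hψ hQ1' hQψ
  have hCx : C = R * ψ / arqExponent Q1 ψ := by
    rw [hC, arqExponent]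
    field_simp
  have hCpos : 0 < C := by rw [hCx]; positivity
  have hθR : θ * R = arqExponent Q1 ψ := by
    rw [hθ, hCx]
    field_simp
  have hspec : Real.exp (-ψ) = Q1 + (1 - Q1) * Real.exp (-(θ * R)) := by
    rw [hθR, arqExponent_spec hQ1' hQψ]
  refine ⟨hCpos, by rw [hθ]; positivity, hspec, ?_, ?_⟩
  · rw [← hspec, log_exp, hθ]
    field_simp
  · rw [hθ]
    field_simp

/-- Corollary 13: ARQ effective capacity in the
QoS-parameter `ψ`. With `C = R/(1 + ψ^{-1} ln((1-Q₁)/(1-Q₁e^ψ)))` and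
`θ = ψ/C`, one has `C > 0`, `θ > 0`, `e^{-ψ} = Q₁ + (1-Q₁) e^{-θR}`,
equivalently `C = -(1/θ) ln(Q₁ + (1-Q₁)e^{-θR})` and `ψ = θ C`. -/
theorem ARQ_effective_capacity_psi
    (Q1 R ψ : ℝ) (hQ1 : 0 < Q1) (hQ1' : Q1 < 1) (hR : 0 < R) (hψ : 0 < ψ)
    (hQψ : Q1 * Real.exp ψ < 1)
    (C : ℝ) (hC : C = R / (1 + ψ⁻¹ *
      Real.log ((1 - Q1) / (1 - Q1 * Real.exp ψ))))
    (θ : ℝ) (hθ : θ = ψ / C) :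
    0 < C ∧ 0 < θ ∧
    Real.exp (-ψ) = Q1 + (1 - Q1) * Real.exp (-(θ * R)) ∧
    C = -(1 / θ) * Real.log (Q1 + (1 - Q1) * Real.exp (-(θ * R))) ∧
    ψ = θ * C :=
  ARQ_effective_capacity_psi_general Q1 R ψ hQ1' hR hψ hQψ C hC θ hθ
end

section
/- Let θ > 0 and Γ > 0 be real, and define g : (0, ∞) → ℝ by g(R) := e^{−(2^R − 1)/Γ} · (e^{−θR} − 1). Then g is differentiable on (0, ∞), and for every R > 0 the derivative g′(R) = 0 if and only if Γ = ln(2) · 2^R · (e^{θR} − 1) / θ. -/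
open Real

/-- The paper's `g(R) = P₁(R) (e^{-θR} - 1)`, with success probability `P₁ = e^{-(2^R - 1)/Γ}`. -/
noncomputable def arqObjective (θ Γ R : ℝ) : ℝ :=
  exp (-((2 ^ R - 1) / Γ)) * (exp (-(θ * R)) - 1)

-- The factor `e^{-θR}` is pulled out so that the remaining factor is the optimality condition.
lemma hasDerivAt_arqObjective (θ Γ R : ℝ) :
    HasDerivAt (arqObjective θ Γ)
      (exp (-((2 ^ R - 1) / Γ)) * exp (-(θ * R)) *
        (log 2 * 2 ^ R * (exp (θ * R) - 1) / Γ - θ)) R := by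
  have hrpow : HasDerivAt (fun R : ℝ => (2 : ℝ) ^ R) (2 ^ R * log 2) R :=
    (hasStrictDerivAt_const_rpow two_pos R).hasDerivAt
  have hlin : HasDerivAt (fun R : ℝ => -(θ * R)) (-θ) R := by
    simpa using ((hasDerivAt_id R).const_mul θ).fun_neg
  have hprod := (((hrpow.sub_const 1).div_const Γ).fun_neg.exp).fun_mul (hlin.exp.sub_const 1)
  refine hprod.congr_deriv ?_
  have hexp : exp (-(θ * R)) * exp (θ * R) = 1 := by rw [← exp_add]; simp
  linear_combination -(exp (-((2 ^ R - 1) / Γ)) * log 2 * 2 ^ R / Γ) * hexp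

lemma deriv_arqObjective_eq_zero_iff {θ Γ : ℝ} (hθ : θ ≠ 0) (hΓ : Γ ≠ 0) (R : ℝ) :
    deriv (arqObjective θ Γ) R = 0 ↔ Γ = log 2 * 2 ^ R * (exp (θ * R) - 1) / θ := by
  rw [(hasDerivAt_arqObjective θ Γ R).deriv, mul_eq_zero, sub_eq_zero,
    or_iff_right (by positivity), div_eq_iff hΓ, eq_div_iff hθ]
  constructor <;> intro h <;> linarith

/-- Corollary 17 / Appendix H: first-order optimality
condition for the rate-optimized effective capacity of ARQ in Rayleigh
fading. The function `g(R) = e^{-(2^R - 1)/Γ}(e^{-θR} - 1)` is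
differentiable on `(0,∞)`, and for `R > 0`, `g'(R) = 0` iff
`Γ = ln(2) · 2^R (e^{θR} - 1)/θ`. -/
theorem ARQ_rate_optimality_condition
    (θ Γ : ℝ) (hθ : 0 < θ) (hΓ : 0 < Γ) :
    (∀ R : ℝ, 0 < R → DifferentiableAt ℝ
      (fun R : ℝ => Real.exp (-(((2 : ℝ) ^ R - 1) / Γ)) *
        (Real.exp (-(θ * R)) - 1)) R) ∧
    (∀ R : ℝ, 0 < R →
      (deriv (fun R : ℝ => Real.exp (-(((2 : ℝ) ^ R - 1) / Γ)) *
          (Real.exp (-(θ * R)) - 1)) R = 0 ↔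
        Γ = Real.log 2 * (2 : ℝ) ^ R * (Real.exp (θ * R) - 1) / θ)) :=
  ⟨fun R _ => (hasDerivAt_arqObjective θ Γ R).differentiableAt,
    fun R _ => deriv_arqObjective_eq_zero_iff hθ.ne' hΓ.ne' R⟩
end
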